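/- arXiv:2602.15802 — 4 statements merged into one kernel-verified Lean document; each statement's English description precedes it below -/
import Mathlib

section
/- Let ε > 0 and δ ∈ [0,1). If two probability distributions P and Q on a common measurable space are (ε,δ)-indistinguishable (i.e., for every measurable event Y, P(Y) ≤ e^ε·Q(Y)+δ and Q(Y) ≤ e^ε·P(Y)+δ), then the Bhattacharyya distance satisfies B(P,Q) ≤ ln((e^{ε/2} + e^{−ε/2})/2) + ln(1/(1−δ)). -/
private lemma aux_min_le (ε p q : ℝ) (hε : 0 ≤ ε) (hp : 0 ≤ p) (hq : 0 ≤ q) :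
    min p (Real.exp ε * q) + min q (Real.exp ε * p) ≤
      (Real.exp (ε / 2) + Real.exp (-(ε / 2))) * Real.sqrt (p * q) := by
  set s := Real.exp (ε / 2) with hs_def
  have hs : 0 < s := Real.exp_pos _
  have hs1 : 1 ≤ s := Real.one_le_exp (by linarith)
  have hE : Real.exp ε = s ^ 2 := by
    rw [hs_def, sq, ← Real.exp_add, add_halves]
  have hinv : Real.exp (-(ε / 2)) = s⁻¹ := by rw [Real.exp_neg]
  rcases le_or_gt p (Real.exp ε * q) with h1 | h1 <;>
    rcases le_or_gt q (Real.exp ε * p) with h2 | h2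
  · -- both ratios bounded
    rw [min_eq_left h1, min_eq_left h2, hinv]
    rw [hE] at h1 h2
    have ha : Real.sqrt p ≤ s * Real.sqrt q := by
      have h := Real.sqrt_le_sqrt h1
      rwa [Real.sqrt_mul (by positivity) q, Real.sqrt_sq hs.le] at h
    have hb : Real.sqrt q ≤ s * Real.sqrt p := by
      have h := Real.sqrt_le_sqrt h2
      rwa [Real.sqrt_mul (by positivity) p, Real.sqrt_sq hs.le] at h
    have hp' : Real.sqrt p ^ 2 = p := Real.sq_sqrt hp
    have hq' : Real.sqrt q ^ 2 = q := Real.sq_sqrt hq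
    have hsq : Real.sqrt (p * q) = Real.sqrt p * Real.sqrt q := Real.sqrt_mul hp q
    have key : s * (p + q) ≤ (s ^ 2 + 1) * (Real.sqrt p * Real.sqrt q) := by
      nlinarith [mul_nonneg (sub_nonneg.2 ha) (sub_nonneg.2 hb),
        Real.sqrt_nonneg p, Real.sqrt_nonneg q]
    rw [hsq, ← mul_le_mul_iff_right₀ hs]
    have heq : s * ((s + s⁻¹) * (Real.sqrt p * Real.sqrt q))
        = (s * s) * (Real.sqrt p * Real.sqrt q)
          + (s * s⁻¹) * (Real.sqrt p * Real.sqrt q) := by ring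
    rw [heq, mul_inv_cancel₀ hs.ne']
    nlinarith [key]
  · -- q > e^ε p
    rw [min_eq_left h1, min_eq_right h2.le, hE, hinv]
    rw [hE] at h2
    have hsp : s * p ≤ Real.sqrt (p * q) := by
      have h : Real.sqrt (p * (s ^ 2 * p)) ≤ Real.sqrt (p * q) :=
        Real.sqrt_le_sqrt (by nlinarith)
      calc s * p = Real.sqrt (p * (s ^ 2 * p)) := by
            rw [show p * (s ^ 2 * p) = (s * p) ^ 2 by ring, Real.sqrt_sq (by positivity)]
        _ ≤ _ := h
    have hmul := mul_le_mul_of_nonneg_left hsp (show (0:ℝ) ≤ s + s⁻¹ by positivity)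
    have heq : (s + s⁻¹) * (s * p) = (s * s) * p + (s⁻¹ * s) * p := by ring
    rw [inv_mul_cancel₀ hs.ne'] at heq
    nlinarith [hmul]
  · -- p > e^ε q
    rw [min_eq_right h1.le, min_eq_left h2, hE, hinv]
    rw [hE] at h1
    have hsp : s * q ≤ Real.sqrt (p * q) := by
      have h : Real.sqrt ((s ^ 2 * q) * q) ≤ Real.sqrt (p * q) :=
        Real.sqrt_le_sqrt (by nlinarith)
      calc s * q = Real.sqrt ((s ^ 2 * q) * q) := by
            rw [show (s ^ 2 * q) * q = (s * q) ^ 2 by ring, Real.sqrt_sq (by positivity)]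
        _ ≤ _ := h
    have hmul := mul_le_mul_of_nonneg_left hsp (show (0:ℝ) ≤ s + s⁻¹ by positivity)
    have heq : (s + s⁻¹) * (s * q) = (s * s) * q + (s⁻¹ * s) * q := by ring
    rw [inv_mul_cancel₀ hs.ne'] at heq
    nlinarith [hmul]
  · -- impossible
    exfalso
    rw [hE] at h1 h2
    have hs2 : 1 ≤ s ^ 2 := by nlinarith
    nlinarith [mul_lt_mul_of_pos_left h2 (pow_pos hs 2),
      mul_nonneg (sub_nonneg.2 hs2) (mul_nonneg (sq_nonneg s) hp),
      mul_nonneg (sub_nonneg.2 hs2) hp]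

private lemma tsum_min_ge {α : Type*} (ε δ : ℝ) (P Q : α → ℝ)
    (hP0 : ∀ x, 0 ≤ P x) (hQ0 : ∀ x, 0 ≤ Q x)
    (hP1 : ∑' x, P x = 1)
    (hPQ : ∀ Y : Set α, (∑' x, Y.indicator P x) ≤ Real.exp ε * (∑' x, Y.indicator Q x) + δ)
    (hPs : Summable P) (hQs : Summable Q) :
    1 - δ ≤ ∑' x, min (P x) (Real.exp ε * Q x) := by
  set E := Real.exp ε with hE_def
  have hEpos : 0 < E := Real.exp_pos _
  set A : Set α := {x | E * Q x < P x} with hA_def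
  have hfs : Summable (fun x => min (P x) (E * Q x)) :=
    Summable.of_nonneg_of_le (fun x => le_min (hP0 x) (mul_nonneg hEpos.le (hQ0 x)))
      (fun x => min_le_left _ _) hPs
  have hind : ∀ x, P x - min (P x) (E * Q x) = A.indicator (fun x => P x - E * Q x) x := by
    intro x
    by_cases hx : x ∈ A
    · rw [Set.indicator_of_mem hx, min_eq_right (le_of_lt hx)]
    · rw [Set.indicator_of_notMem hx, min_eq_left (not_lt.1 hx)]; ring
  have hindP : Summable (A.indicator P) := hPs.indicator A
  have hindQ : Summable (A.indicator Q) := hQs.indicator A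
  have hdiff : ∀ x, A.indicator (fun x => P x - E * Q x) x
      = A.indicator P x - E * A.indicator Q x := by
    intro x
    by_cases hx : x ∈ A <;> simp [Set.indicator_of_mem, Set.indicator_of_notMem, hx]
  have hsum_diff : ∑' x, (P x - min (P x) (E * Q x))
      = ∑' x, A.indicator P x - E * ∑' x, A.indicator Q x := by
    calc ∑' x, (P x - min (P x) (E * Q x))
        = ∑' x, (A.indicator P x - E * A.indicator Q x) := by
          apply tsum_congr; intro x; rw [hind x, hdiff x]
      _ = ∑' x, A.indicator P x - ∑' x, E * A.indicator Q x :=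
          Summable.tsum_sub hindP (hindQ.mul_left E)
      _ = _ := by rw [tsum_mul_left]
  have hδ : ∑' x, (P x - min (P x) (E * Q x)) ≤ δ := by
    rw [hsum_diff]
    have h := hPQ A
    linarith
  have hsplit : ∑' x, (P x - min (P x) (E * Q x))
      = 1 - ∑' x, min (P x) (E * Q x) := by
    rw [Summable.tsum_sub hPs hfs, hP1]
  linarith [hsplit ▸ hδ]

/-- If two discrete probability distributions `P, Q` are `(ε,δ)`-indistinguishable,
then their Bhattacharyya distance `−ln Σ √(P·Q)` is at most
`ln((e^{ε/2}+e^{−ε/2})/2) + ln(1/(1−δ))`. -/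
theorem bhattacharyya_le_of_indistinguishable {α : Type*}
    (ε δ : ℝ) (hε : 0 < ε) (hδ0 : 0 ≤ δ) (hδ1 : δ < 1)
    (P Q : α → ℝ) (hP0 : ∀ x, 0 ≤ P x) (hQ0 : ∀ x, 0 ≤ Q x)
    (hP1 : ∑' x, P x = 1) (hQ1 : ∑' x, Q x = 1)
    (hPQ : ∀ Y : Set α, (∑' x, Y.indicator P x) ≤ Real.exp ε * (∑' x, Y.indicator Q x) + δ)
    (hQP : ∀ Y : Set α, (∑' x, Y.indicator Q x) ≤ Real.exp ε * (∑' x, Y.indicator P x) + δ) :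
    -Real.log (∑' x, Real.sqrt (P x * Q x)) ≤
      Real.log ((Real.exp (ε / 2) + Real.exp (-(ε / 2))) / 2) + Real.log (1 / (1 - δ)) := by
  have hPs : Summable P := by
    by_contra h
    rw [tsum_eq_zero_of_not_summable h] at hP1
    norm_num at hP1
  have hQs : Summable Q := by
    by_contra h
    rw [tsum_eq_zero_of_not_summable h] at hQ1
    norm_num at hQ1
  have hEpos : (0:ℝ) < Real.exp ε := Real.exp_pos _
  set C : ℝ := Real.exp (ε / 2) + Real.exp (-(ε / 2)) with hC_def
  have hC : 0 < C := by positivity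
  set S : ℝ := ∑' x, Real.sqrt (P x * Q x) with hS_def
  have hSs : Summable (fun x => Real.sqrt (P x * Q x)) := by
    apply Summable.of_nonneg_of_le (fun x => Real.sqrt_nonneg _) (fun x => ?_) (hPs.add hQs)
    have h := Real.sqrt_le_sqrt (show P x * Q x ≤ (P x + Q x) ^ 2 by nlinarith [hP0 x, hQ0 x])
    rwa [Real.sqrt_sq (add_nonneg (hP0 x) (hQ0 x))] at h
  have hfs : Summable (fun x => min (P x) (Real.exp ε * Q x)) :=
    Summable.of_nonneg_of_le (fun x => le_min (hP0 x) (mul_nonneg hEpos.le (hQ0 x)))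
      (fun x => min_le_left _ _) hPs
  have hgs : Summable (fun x => min (Q x) (Real.exp ε * P x)) :=
    Summable.of_nonneg_of_le (fun x => le_min (hQ0 x) (mul_nonneg hEpos.le (hP0 x)))
      (fun x => min_le_left _ _) hQs
  have h1 : 1 - δ ≤ ∑' x, min (P x) (Real.exp ε * Q x) :=
    tsum_min_ge ε δ P Q hP0 hQ0 hP1 hPQ hPs hQs
  have h2 : 1 - δ ≤ ∑' x, min (Q x) (Real.exp ε * P x) :=
    tsum_min_ge ε δ Q P hQ0 hP0 hQ1 hQP hQs hPs
  have hmain : 2 * (1 - δ) ≤ C * S := by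
    have hle : ∑' x, (min (P x) (Real.exp ε * Q x) + min (Q x) (Real.exp ε * P x))
        ≤ ∑' x, C * Real.sqrt (P x * Q x) := by
      apply Summable.tsum_le_tsum (fun x => aux_min_le ε (P x) (Q x) hε.le (hP0 x) (hQ0 x))
        (hfs.add hgs) (hSs.mul_left C)
    rw [Summable.tsum_add hfs hgs, tsum_mul_left] at hle
    linarith
  have hδ' : (0:ℝ) < 1 - δ := by linarith
  have hSpos : 0 < S := by nlinarith
  have hlog : Real.log (2 * (1 - δ) / C) ≤ Real.log S := by
    apply Real.log_le_log (by positivity)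
    rw [div_le_iff₀ hC]
    linarith
  have hlhs : Real.log (2 * (1 - δ) / C) = Real.log 2 + Real.log (1 - δ) - Real.log C := by
    rw [Real.log_div (by positivity) hC.ne', Real.log_mul two_ne_zero hδ'.ne']
  have hr1 : Real.log (C / 2) = Real.log C - Real.log 2 :=
    Real.log_div hC.ne' two_ne_zero
  have hr2 : Real.log (1 / (1 - δ)) = -Real.log (1 - δ) := by
    rw [one_div, Real.log_inv]
  rw [hr1, hr2]
  linarith [hlog, hlhs]
end

section
/- Let ε > 0. Suppose R_1,…,R_n are randomized functions (local randomizers) such that for all node-neighboring graphs G, G' on [n] and all outputs z ∈ Z^n, |Σ_{i∈[n]} ln(Pr[R_i(N_i^G)=z_i]/Pr[R_i(N_i^{G'})=z_i])| ≤ ε, and for each i and any two possible neighborhoods X, X' of node i, |ln(Pr[R_i(X)=z]/Pr[R_i(X')=z])| ≤ ε for all z. Then for every pair of node-neighboring graphs G, G' and every z ∈ Z^n, Σ_{i∈[n]} |ln(Pr[R_i(N_i^G)=z_i]/Pr[R_i(N_i^{G'})=z_i])| ≤ 3ε. -/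
/-- Two graphs on `[n]` are node neighbors if they differ only in edges
incident to a single vertex. -/
def NodeNeighbor {n : ℕ} (G G' : SimpleGraph (Fin n)) : Prop :=
  ∃ i₀ : Fin n, ∀ u v : Fin n, u ≠ i₀ → v ≠ i₀ → (G.Adj u v ↔ G'.Adj u v)

open scoped Classical in
/-- The graph that agrees with `G` away from `i₀`, and where for each `i`,
the edge `{i, i₀}` follows `G` if `c i` holds and `G'` otherwise. -/
noncomputable def mixGraph {n : ℕ} (G G' : SimpleGraph (Fin n)) (i₀ : Fin n)
    (c : Fin n → Prop) : SimpleGraph (Fin n) where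
  Adj u v := u ≠ v ∧ ((u = i₀ ∧ (if c v then G.Adj u v else G'.Adj u v)) ∨
    (v = i₀ ∧ (if c u then G.Adj u v else G'.Adj u v)) ∨
    (u ≠ i₀ ∧ v ≠ i₀ ∧ G.Adj u v))
  symm := by
    constructor
    rintro u v ⟨h1, h2⟩
    refine ⟨h1.symm, ?_⟩
    rw [G.adj_comm, G'.adj_comm] at h2
    tauto
  loopless := by
    constructor
    rintro u ⟨h1, -⟩
    exact h1 rfl

open scoped Classical in
lemma mixGraph_adj {n : ℕ} {G G' : SimpleGraph (Fin n)} {i₀ : Fin n}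
    {c : Fin n → Prop} {u v : Fin n} :
    (mixGraph G G' i₀ c).Adj u v ↔ u ≠ v ∧
      ((u = i₀ ∧ (if c v then G.Adj u v else G'.Adj u v)) ∨
       (v = i₀ ∧ (if c u then G.Adj u v else G'.Adj u v)) ∨
       (u ≠ i₀ ∧ v ≠ i₀ ∧ G.Adj u v)) := Iff.rfl

lemma mixGraph_adj_off {n : ℕ} {G G' : SimpleGraph (Fin n)} {i₀ : Fin n}
    (c : Fin n → Prop) {u v : Fin n} (hu : u ≠ i₀) (hv : v ≠ i₀) :
    (mixGraph G G' i₀ c).Adj u v ↔ G.Adj u v := by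
  rw [mixGraph_adj]
  constructor
  · rintro ⟨h1, h2 | h2 | h2⟩
    · exact absurd h2.1 hu
    · exact absurd h2.1 hv
    · exact h2.2.2
  · intro h
    exact ⟨G.ne_of_adj h, Or.inr (Or.inr ⟨hu, hv, h⟩)⟩

open scoped Classical in
lemma mixGraph_neighborSet {n : ℕ} {G G' : SimpleGraph (Fin n)} {i₀ : Fin n}
    (h : ∀ u v : Fin n, u ≠ i₀ → v ≠ i₀ → (G.Adj u v ↔ G'.Adj u v))
    (c : Fin n → Prop) {i : Fin n} (hi : i ≠ i₀) :
    (mixGraph G G' i₀ c).neighborSet i =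
      if c i then G.neighborSet i else G'.neighborSet i := by
  ext v
  by_cases hci : c i
  · rw [if_pos hci]
    simp only [SimpleGraph.mem_neighborSet, mixGraph_adj]
    constructor
    · rintro ⟨h1, h2 | h2 | h2⟩
      · exact absurd h2.1 hi
      · rw [if_pos hci] at h2; exact h2.2
      · exact h2.2.2
    · intro hadj
      by_cases hv : v = i₀
      · exact ⟨G.ne_of_adj hadj, Or.inr (Or.inl ⟨hv, by rw [if_pos hci]; exact hadj⟩)⟩
      · exact ⟨G.ne_of_adj hadj, Or.inr (Or.inr ⟨hi, hv, hadj⟩)⟩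
  · rw [if_neg hci]
    simp only [SimpleGraph.mem_neighborSet, mixGraph_adj]
    constructor
    · rintro ⟨h1, h2 | h2 | h2⟩
      · exact absurd h2.1 hi
      · rw [if_neg hci] at h2; exact h2.2
      · exact (h i v hi h2.2.1).mp h2.2.2
    · intro hadj
      by_cases hv : v = i₀
      · exact ⟨G'.ne_of_adj hadj, Or.inr (Or.inl ⟨hv, by rw [if_neg hci]; exact hadj⟩)⟩
      · exact ⟨G'.ne_of_adj hadj, Or.inr (Or.inr ⟨hi, hv, (h i v hi hv).mpr hadj⟩)⟩

/-- Privacy loss of pure LNDP (case `k = 1`): if for every pair of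
node-neighboring graphs the sum of privacy losses has absolute value at most
`ε`, and each individual randomizer has privacy loss at most `ε` on any pair
of inputs, then for node-neighboring graphs the sum of the *absolute values*
of the privacy losses is at most `3ε`. -/
theorem sum_abs_privacy_loss_le {n : ℕ} {Z : Type*} (ε : ℝ) (hε : 0 < ε)
    (R : Fin n → Set (Fin n) → Z → ℝ)
    (hpos : ∀ i X z, 0 < R i X z)
    (hsingle : ∀ (i : Fin n) (X X' : Set (Fin n)) (z : Z),
      |Real.log (R i X z / R i X' z)| ≤ ε)
    (hjoint : ∀ (G G' : SimpleGraph (Fin n)), NodeNeighbor G G' →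
      ∀ z : Fin n → Z,
        |∑ i, Real.log (R i (G.neighborSet i) (z i) / R i (G'.neighborSet i) (z i))| ≤ ε) :
    ∀ (G G' : SimpleGraph (Fin n)), NodeNeighbor G G' →
      ∀ z : Fin n → Z,
        ∑ i, |Real.log (R i (G.neighborSet i) (z i) / R i (G'.neighborSet i) (z i))| ≤
          3 * ε := by
  classical
  rintro G G' ⟨i₀, hGG'⟩ z
  set L : Fin n → ℝ := fun i =>
    Real.log (R i (G.neighborSet i) (z i) / R i (G'.neighborSet i) (z i)) with hLdef
  have hGG'symm : ∀ u v : Fin n, u ≠ i₀ → v ≠ i₀ → (G'.Adj u v ↔ G.Adj u v) :=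
    fun u v hu hv => (hGG' u v hu hv).symm
  set H : SimpleGraph (Fin n) := mixGraph G G' i₀ (fun i => 0 ≤ L i) with hHdef
  set H' : SimpleGraph (Fin n) := mixGraph G' G i₀ (fun i => 0 ≤ L i) with hH'def
  have hHH' : NodeNeighbor H H' := by
    refine ⟨i₀, fun u v hu hv => ?_⟩
    rw [hHdef, hH'def, mixGraph_adj_off _ hu hv, mixGraph_adj_off _ hu hv]
    exact hGG' u v hu hv
  set M : Fin n → ℝ := fun i =>
    Real.log (R i (H.neighborSet i) (z i) / R i (H'.neighborSet i) (z i)) with hMdef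
  have key : ∀ i ∈ Finset.univ.erase i₀, |L i| = M i := by
    intro i hi
    have hi0 : i ≠ i₀ := Finset.ne_of_mem_erase hi
    by_cases hc : 0 ≤ L i
    · have h1 : H.neighborSet i = G.neighborSet i := by
        rw [hHdef, mixGraph_neighborSet hGG' _ hi0, if_pos hc]
      have h2 : H'.neighborSet i = G'.neighborSet i := by
        rw [hH'def, mixGraph_neighborSet hGG'symm _ hi0, if_pos hc]
      rw [abs_of_nonneg hc, hMdef]
      simp only [h1, h2, hLdef]
    · have h1 : H.neighborSet i = G'.neighborSet i := by
        rw [hHdef, mixGraph_neighborSet hGG' _ hi0, if_neg hc]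
      have h2 : H'.neighborSet i = G.neighborSet i := by
        rw [hH'def, mixGraph_neighborSet hGG'symm _ hi0, if_neg hc]
      rw [abs_of_neg (lt_of_not_ge hc), hMdef]
      simp only [h1, h2, hLdef]
      rw [Real.log_div (hpos _ _ _).ne' (hpos _ _ _).ne',
        Real.log_div (hpos _ _ _).ne' (hpos _ _ _).ne']
      ring
  have hsum : ∑ i, |L i| = |L i₀| + (∑ i, M i - M i₀) := by
    rw [← Finset.add_sum_erase _ _ (Finset.mem_univ i₀),
      Finset.sum_congr rfl key, Finset.sum_erase_eq_sub (Finset.mem_univ i₀)]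
  have h1 : |L i₀| ≤ ε := hsingle _ _ _ _
  have h2 : |∑ i, M i| ≤ ε := hjoint H H' hHH' z
  have h3 : |M i₀| ≤ ε := hsingle _ _ _ _
  have h2' : ∑ i, M i ≤ ε := le_trans (le_abs_self _) h2
  have h3' : -ε ≤ M i₀ := neg_le_of_abs_le h3
  rw [show (∑ i, |Real.log (R i (G.neighborSet i) (z i) /
      R i (G'.neighborSet i) (z i))|) = ∑ i, |L i| from rfl, hsum]
  linarith
end

section
/- Let ε > 0 and let P, Q be probability distributions such that for every measurable event A, P(A) ≤ e^ε·Q(A) and Q(A) ≤ e^ε·P(A) (pure ε-indistinguishability). Then KL(P ‖ Q) ≤ ε²/2; moreover, if additionally P ≈_{ε,δ} Q with δ ∈ [0,1) and ε ≤ 1, then d_TV(P,Q) ≤ 2ε + δ. -/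
lemma aux_exp_key (x : ℝ) (hx : 0 ≤ x) : 2 * (Real.exp x - 1) ≤ x * (Real.exp x + 1) := by
  have h : ∀ y : ℝ, 0 ≤ ((y - 1) * Real.exp y + 1) / 2 := by
    intro y
    have h1 : 1 - y ≤ Real.exp (-y) := by
      have := Real.add_one_le_exp (-y); linarith
    have h2 : (1 - y) * Real.exp y ≤ 1 := by
      have := mul_le_mul_of_nonneg_right h1 (Real.exp_pos y).le
      rwa [← Real.exp_add, neg_add_cancel, Real.exp_zero] at this
    nlinarith
  have mono : Monotone (fun t : ℝ => (t * (Real.exp t + 1) - 2 * (Real.exp t - 1)) / 2) := by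
    apply monotone_of_hasDerivAt_nonneg (f' := fun y => ((y - 1) * Real.exp y + 1) / 2)
    · intro y
      have : HasDerivAt (fun t : ℝ => (t * (Real.exp t + 1) - 2 * (Real.exp t - 1)) / 2)
          ((1 * (Real.exp y + 1) + y * Real.exp y - 2 * Real.exp y) / 2) y := by
        exact (((hasDerivAt_id y).mul ((Real.hasDerivAt_exp y).add_const 1)).sub
          (((Real.hasDerivAt_exp y).sub_const 1).const_mul 2)).div_const 2
      convert this using 1; ring
    · exact h
  have := mono hx
  simp only [Real.exp_zero] at this
  linarith

/-- For discrete probability distributions `P, Q`: if `P` and `Q` are purely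
`ε`-indistinguishable then `KL(P‖Q) ≤ ε²/2`; moreover, if additionally
`P ≈_{ε,δ} Q` with `δ ∈ [0,1)` and `ε ≤ 1`, then `d_TV(P,Q) ≤ 2ε + δ`. -/
theorem kl_le_and_tv_le_of_indistinguishable {α : Type*} (ε : ℝ) (hε : 0 < ε)
    (P Q : α → ℝ) (hP0 : ∀ x, 0 ≤ P x) (hQ0 : ∀ x, 0 ≤ Q x)
    (hP1 : ∑' x, P x = 1) (hQ1 : ∑' x, Q x = 1)
    (hPQ : ∀ A : Set α, (∑' x, A.indicator P x) ≤ Real.exp ε * (∑' x, A.indicator Q x))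
    (hQP : ∀ A : Set α, (∑' x, A.indicator Q x) ≤ Real.exp ε * (∑' x, A.indicator P x)) :
    (∑' x, P x * Real.log (P x / Q x)) ≤ ε ^ 2 / 2 ∧
    (ε ≤ 1 → ∀ δ : ℝ, 0 ≤ δ → δ < 1 →
      (∀ A : Set α,
        (∑' x, A.indicator P x) ≤ Real.exp ε * (∑' x, A.indicator Q x) + δ ∧
        (∑' x, A.indicator Q x) ≤ Real.exp ε * (∑' x, A.indicator P x) + δ) →
      ∀ A : Set α,
        |(∑' x, A.indicator P x) - (∑' x, A.indicator Q x)| ≤ 2 * ε + δ) := by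
  have hE1 : 1 < Real.exp ε := by have := Real.add_one_le_exp ε; linarith
  have hF1 : Real.exp (-ε) < 1 := by
    have := Real.exp_lt_exp.2 (by linarith : -ε < (0:ℝ)); simpa using this
  have hFpos : 0 < Real.exp (-ε) := Real.exp_pos _
  have hEF : Real.exp ε * Real.exp (-ε) = 1 := by
    rw [← Real.exp_add, add_neg_cancel, Real.exp_zero]
  have hD : 0 < Real.exp ε - Real.exp (-ε) := by linarith
  have key : 2 * (Real.exp ε - 1) ≤ ε * (Real.exp ε + 1) := aux_exp_key ε hε.le
  -- summability
  have hPs : Summable P := by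
    by_contra h; rw [tsum_eq_zero_of_not_summable h] at hP1; norm_num at hP1
  have hQs : Summable Q := by
    by_contra h; rw [tsum_eq_zero_of_not_summable h] at hQ1; norm_num at hQ1
  -- singleton evaluation
  have hsing : ∀ (f : α → ℝ) (x : α), (∑' y, ({x} : Set α).indicator f y) = f x := by
    intro f x
    rw [tsum_eq_single x fun y hy => Set.indicator_of_notMem (by simpa using hy) f]
    exact Set.indicator_of_mem (Set.mem_singleton x) f
  have hPle : ∀ x, P x ≤ Real.exp ε * Q x := by
    intro x; have := hPQ {x}; rwa [hsing, hsing] at this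
  have hQle : ∀ x, Q x ≤ Real.exp ε * P x := by
    intro x; have := hQP {x}; rwa [hsing, hsing] at this
  constructor
  · -- KL bound
    set c₁ : ℝ := ε * (Real.exp ε + Real.exp (-ε)) / (Real.exp ε - Real.exp (-ε)) with hc₁
    set c₂ : ℝ := -(2 * ε) / (Real.exp ε - Real.exp (-ε)) with hc₂
    have hpt : ∀ x, P x * Real.log (P x / Q x) ≤ c₁ * P x + c₂ * Q x := by
      intro x
      rcases eq_or_lt_of_le (hQ0 x) with hq | hq
      · have hp : P x = 0 := le_antisymm (by nlinarith [hPle x]) (hP0 x)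
        simp [hp, ← hq]
      · have hp : 0 < P x := by nlinarith [hQle x]
        have hu1 : P x / Q x ≤ Real.exp ε := (div_le_iff₀ hq).2 (hPle x)
        have hu2 : Real.exp (-ε) ≤ P x / Q x := by
          rw [le_div_iff₀ hq]; nlinarith [hQle x]
        set u : ℝ := P x / Q x with hu
        set θ : ℝ := (u - Real.exp (-ε)) / (Real.exp ε - Real.exp (-ε)) with hθ
        have hθ0 : 0 ≤ θ := div_nonneg (by linarith) hD.le
        have hθ1 : θ ≤ 1 := (div_le_one hD).2 (by linarith)
        have hcomb : θ * Real.exp ε + (1 - θ) * Real.exp (-ε) = u := by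
          have h := div_mul_cancel₀ (u - Real.exp (-ε)) hD.ne'; rw [← hθ] at h; linear_combination h
        have hcx := Real.convexOn_mul_log.2 (Set.mem_Ici.2 (Real.exp_pos ε).le)
          (Set.mem_Ici.2 hFpos.le) hθ0 (by linarith : (0:ℝ) ≤ 1 - θ) (by ring)
        simp only [smul_eq_mul] at hcx
        rw [hcomb, Real.log_exp, Real.log_exp] at hcx
        have hPu : P x = Q x * u := by rw [hu, mul_div_assoc', mul_div_cancel_left₀ _ hq.ne']
        have step : P x * Real.log u ≤ Q x * (θ * (Real.exp ε * ε) + (1 - θ) * (Real.exp (-ε) * (-ε))) := by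
          calc P x * Real.log u = Q x * (u * Real.log u) := by rw [hPu]; ring
            _ ≤ _ := mul_le_mul_of_nonneg_left hcx hq.le
        have heq : Q x * (θ * (Real.exp ε * ε) + (1 - θ) * (Real.exp (-ε) * (-ε)))
            = c₁ * P x + c₂ * Q x := by
          rw [hc₁, hc₂, hθ, hu]
          field_simp
          linear_combination (-2 * Q x) * hEF
        rw [heq] at step
        exact step
    have habs : ∀ x, |P x * Real.log (P x / Q x)| ≤ ε * P x := by
      intro x
      rcases eq_or_lt_of_le (hP0 x) with hp | hp
      · simp [← hp]
      · have hq : 0 < Q x := by nlinarith [hPle x]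
        have hu0 : 0 < P x / Q x := div_pos hp hq
        have hu1 : P x / Q x ≤ Real.exp ε := (div_le_iff₀ hq).2 (hPle x)
        have hu2 : Real.exp (-ε) ≤ P x / Q x := by
          rw [le_div_iff₀ hq]; nlinarith [hQle x]
        have hl1 : Real.log (P x / Q x) ≤ ε := by
          calc Real.log (P x / Q x) ≤ Real.log (Real.exp ε) := Real.log_le_log hu0 hu1
            _ = ε := Real.log_exp ε
        have hl2 : -ε ≤ Real.log (P x / Q x) := by
          calc -ε = Real.log (Real.exp (-ε)) := (Real.log_exp _).symm
            _ ≤ Real.log (P x / Q x) := Real.log_le_log hFpos hu2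
        rw [abs_mul, abs_of_pos hp]
        have : |Real.log (P x / Q x)| ≤ ε := abs_le.2 ⟨hl2, hl1⟩
        calc P x * |Real.log (P x / Q x)| ≤ P x * ε := mul_le_mul_of_nonneg_left this hp.le
          _ = ε * P x := mul_comm _ _
    have hsum1 : Summable (fun x => P x * Real.log (P x / Q x)) :=
      Summable.of_abs (Summable.of_nonneg_of_le (fun x => abs_nonneg _) habs (hPs.mul_left ε))
    have hsum2 : Summable (fun x => c₁ * P x + c₂ * Q x) := (hPs.mul_left c₁).add (hQs.mul_left c₂)
    have hKL : (∑' x, P x * Real.log (P x / Q x)) ≤ c₁ + c₂ := by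
      calc (∑' x, P x * Real.log (P x / Q x)) ≤ ∑' x, (c₁ * P x + c₂ * Q x) :=
            Summable.tsum_le_tsum hpt hsum1 hsum2
        _ = c₁ * (∑' x, P x) + c₂ * (∑' x, Q x) := by
            rw [Summable.tsum_add (hPs.mul_left c₁) (hQs.mul_left c₂), tsum_mul_left, tsum_mul_left]
        _ = c₁ + c₂ := by rw [hP1, hQ1]; ring
    have hfinal : c₁ + c₂ ≤ ε ^ 2 / 2 := by
      rw [hc₁, hc₂, ← add_div, div_le_iff₀ hD]
      nlinarith [mul_le_mul_of_nonneg_left key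
        (mul_nonneg hε.le (by linarith : (0:ℝ) ≤ Real.exp ε - 1)), hEF, Real.exp_pos ε]
    linarith
  · -- TV bound
    intro hε1 δ hδ0 _ hAδ A
    have hE2 : Real.exp ε ≤ 1 + 2 * ε := by nlinarith [key]
    have hind : ∀ (f : α → ℝ), (∀ x, 0 ≤ f x) → Summable f → (∑' x, f x) = 1 →
        0 ≤ (∑' x, A.indicator f x) ∧ (∑' x, A.indicator f x) ≤ 1 := by
      intro f hf0 hfs hf1
      constructor
      · exact tsum_nonneg fun x => Set.indicator_nonneg (fun y _ => hf0 y) x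
      · rw [← hf1]
        exact Summable.tsum_le_tsum (fun x => Set.indicator_le_self' (fun y _ => hf0 y) x)
          (hfs.indicator A) hfs
    obtain ⟨hPA0, hPA1⟩ := hind P hP0 hPs hP1
    obtain ⟨hQA0, hQA1⟩ := hind Q hQ0 hQs hQ1
    obtain ⟨h1, h2⟩ := hAδ A
    rw [abs_le]
    constructor <;> nlinarith [hE2]
end

section
/- Let ε ∈ (0,1], and set p = 1/(e^ε + 1) and q = (1 + (t/n)(e^ε − 1))/(1 + e^ε) for t ∈ [n]. Let A ∼ Bin(n, p) and B ∼ Bin(n, q). Then d_TV(A, B) ≤ t·(e^ε − 1)/(e^{ε/2}·√(2n)). -/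
open Finset Real

/-- elementary estimate: `(√q - √p)² ≤ (q-p)²/(4p)` for `0 < p ≤ q`. -/
lemma aux_sqrt_sub_sq_le (p q : ℝ) (hp : 0 < p) (hpq : p ≤ q) :
    (Real.sqrt q - Real.sqrt p) ^ 2 ≤ (q - p) ^ 2 / (4 * p) := by
  rw [le_div_iff₀ (by positivity)]
  have hu : Real.sqrt p ^ 2 = p := Real.sq_sqrt hp.le
  have hv : Real.sqrt q ^ 2 = q := Real.sq_sqrt (hp.le.trans hpq)
  have huv : Real.sqrt p ≤ Real.sqrt q := Real.sqrt_le_sqrt hpq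
  have hu0 : 0 ≤ Real.sqrt p := Real.sqrt_nonneg _
  nlinarith [mul_nonneg (mul_nonneg (sub_nonneg.2 huv) (sub_nonneg.2 huv))
      (mul_nonneg (sub_nonneg.2 huv) (by positivity : (0:ℝ) ≤ Real.sqrt q + 3 * Real.sqrt p))]

/-- TV-type bound for binomial pmfs via the Bhattacharyya coefficient. -/
lemma aux_tv_sq_bound (n : ℕ) (p q : ℝ) (hp0 : 0 ≤ p) (hp1 : p ≤ 1) (hq0 : 0 ≤ q) (hq1 : q ≤ 1) :
    (∑ k ∈ Finset.range (n + 1),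
        |((n.choose k : ℝ) * p ^ k * (1 - p) ^ (n - k)) -
          ((n.choose k : ℝ) * q ^ k * (1 - q) ^ (n - k))|) ^ 2
      ≤ 8 * n * (1 - (Real.sqrt (p * q) + Real.sqrt ((1 - p) * (1 - q)))) := by
  set ρ : ℝ := Real.sqrt (p * q) + Real.sqrt ((1 - p) * (1 - q)) with hρdef
  clear_value ρ
  have hp1' : 0 ≤ 1 - p := by linarith
  have hq1' : 0 ≤ 1 - q := by linarith
  set f : ℕ → ℝ := fun k => (n.choose k : ℝ) * p ^ k * (1 - p) ^ (n - k) with hfdef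
  set g : ℕ → ℝ := fun k => (n.choose k : ℝ) * q ^ k * (1 - q) ^ (n - k) with hgdef
  have hf : ∀ k, 0 ≤ f k := fun k => by
    simp only [hfdef]; positivity
  have hg : ∀ k, 0 ≤ g k := fun k => by
    simp only [hgdef]; positivity
  have hsumf : ∑ k ∈ Finset.range (n + 1), f k = 1 := by
    have := add_pow p (1 - p) n
    simp only [add_sub_cancel, one_pow] at this
    rw [show ∑ k ∈ Finset.range (n + 1), f k
        = ∑ k ∈ Finset.range (n + 1), p ^ k * (1 - p) ^ (n - k) * (n.choose k : ℝ) from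
      Finset.sum_congr rfl fun k _ => by simp only [hfdef]; ring]
    linarith [this]
  have hsumg : ∑ k ∈ Finset.range (n + 1), g k = 1 := by
    have := add_pow q (1 - q) n
    simp only [add_sub_cancel, one_pow] at this
    rw [show ∑ k ∈ Finset.range (n + 1), g k
        = ∑ k ∈ Finset.range (n + 1), q ^ k * (1 - q) ^ (n - k) * (n.choose k : ℝ) from
      Finset.sum_congr rfl fun k _ => by simp only [hgdef]; ring]
    linarith [this]
  have hB : ∑ k ∈ Finset.range (n + 1), Real.sqrt (f k * g k) = ρ ^ n := by
    have h1 : Real.sqrt (p * q) ^ 2 = p * q := Real.sq_sqrt (by positivity)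
    have h2 : Real.sqrt ((1 - p) * (1 - q)) ^ 2 = (1 - p) * (1 - q) :=
      Real.sq_sqrt (by positivity)
    have hterm : ∀ k ∈ Finset.range (n + 1), Real.sqrt (f k * g k)
        = Real.sqrt (p * q) ^ k * Real.sqrt ((1 - p) * (1 - q)) ^ (n - k) * (n.choose k : ℝ) := by
      intro k _
      have key : f k * g k
          = (Real.sqrt (p * q) ^ k * Real.sqrt ((1 - p) * (1 - q)) ^ (n - k)
              * (n.choose k : ℝ)) ^ 2 := by
        have : (Real.sqrt (p * q) ^ k * Real.sqrt ((1 - p) * (1 - q)) ^ (n - k)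
              * (n.choose k : ℝ)) ^ 2
            = (Real.sqrt (p * q) ^ 2) ^ k * (Real.sqrt ((1 - p) * (1 - q)) ^ 2) ^ (n - k)
              * (n.choose k : ℝ) ^ 2 := by ring
        rw [this, h1, h2, mul_pow p q, mul_pow (1 - p) (1 - q)]
        simp only [hfdef, hgdef]; ring
      rw [key, Real.sqrt_sq (by positivity)]
    rw [Finset.sum_congr rfl hterm, ← add_pow, hρdef]
  -- Cauchy-Schwarz
  have habs : ∀ k ∈ Finset.range (n + 1), |f k - g k|
      = |Real.sqrt (f k) - Real.sqrt (g k)| * (Real.sqrt (f k) + Real.sqrt (g k)) := by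
    intro k _
    have hfg : f k - g k
        = (Real.sqrt (f k) - Real.sqrt (g k)) * (Real.sqrt (f k) + Real.sqrt (g k)) := by
      have e1 : Real.sqrt (f k) ^ 2 = f k := Real.sq_sqrt (hf k)
      have e2 : Real.sqrt (g k) ^ 2 = g k := Real.sq_sqrt (hg k)
      linear_combination e2 - e1
    rw [hfg, abs_mul, abs_of_nonneg (by positivity : (0:ℝ) ≤ Real.sqrt (f k) + Real.sqrt (g k))]
  have hFsq : ∑ k ∈ Finset.range (n + 1),
      |Real.sqrt (f k) - Real.sqrt (g k)| ^ 2 = 2 - 2 * ρ ^ n := by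
    have : ∀ k ∈ Finset.range (n + 1), |Real.sqrt (f k) - Real.sqrt (g k)| ^ 2
        = f k + g k - 2 * Real.sqrt (f k * g k) := by
      intro k _
      rw [sq_abs, sub_sq, Real.sq_sqrt (hf k), Real.sq_sqrt (hg k),
        Real.sqrt_mul (hf k)]
      ring
    rw [Finset.sum_congr rfl this, Finset.sum_sub_distrib, Finset.sum_add_distrib,
      ← Finset.mul_sum, hsumf, hsumg, hB]
    ring
  have hGsq : ∑ k ∈ Finset.range (n + 1),
      (Real.sqrt (f k) + Real.sqrt (g k)) ^ 2 = 2 + 2 * ρ ^ n := by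
    have : ∀ k ∈ Finset.range (n + 1), (Real.sqrt (f k) + Real.sqrt (g k)) ^ 2
        = f k + g k + 2 * Real.sqrt (f k * g k) := by
      intro k _
      rw [add_sq, Real.sq_sqrt (hf k), Real.sq_sqrt (hg k), Real.sqrt_mul (hf k)]
      ring
    rw [Finset.sum_congr rfl this, Finset.sum_add_distrib, Finset.sum_add_distrib,
      ← Finset.mul_sum, hsumf, hsumg, hB]
    ring
  have hcs := Finset.sum_mul_sq_le_sq_mul_sq (Finset.range (n + 1))
    (fun k => |Real.sqrt (f k) - Real.sqrt (g k)|)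
    (fun k => Real.sqrt (f k) + Real.sqrt (g k))
  rw [Finset.sum_congr rfl habs]
  have hchain : (∑ k ∈ Finset.range (n + 1),
      |Real.sqrt (f k) - Real.sqrt (g k)| * (Real.sqrt (f k) + Real.sqrt (g k))) ^ 2
      ≤ (2 - 2 * ρ ^ n) * (2 + 2 * ρ ^ n) := by
    calc _ ≤ (∑ k ∈ Finset.range (n + 1), |Real.sqrt (f k) - Real.sqrt (g k)| ^ 2)
        * ∑ k ∈ Finset.range (n + 1), (Real.sqrt (f k) + Real.sqrt (g k)) ^ 2 := hcs
      _ = _ := by rw [hFsq, hGsq]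
  -- Bernoulli's inequality
  have hρ0 : 0 ≤ ρ := by rw [hρdef]; positivity
  have hbern : 1 + (2 * n : ℕ) * (ρ - 1) ≤ (1 + (ρ - 1)) ^ (2 * n) :=
    one_add_mul_le_pow (by linarith) (2 * n)
  have hpow : (1 + (ρ - 1)) ^ (2 * n) = (ρ ^ n) ^ 2 := by
    rw [show 1 + (ρ - 1) = ρ by ring, mul_comm 2 n, pow_mul]
  rw [hpow] at hbern
  push_cast at hbern
  have h4 : (2 - 2 * ρ ^ n) * (2 + 2 * ρ ^ n) = 4 - 4 * (ρ ^ n) ^ 2 := by ring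
  linarith [hchain, hbern, h4]

set_option maxHeartbeats 1000000 in
/-- Total variation distance between `Bin(n, p)` and `Bin(n, q)` for
`p = 1/(e^ε+1)` and `q = (1 + (t/n)(e^ε−1))/(1+e^ε)` is at most
`t(e^ε−1)/(e^{ε/2}√(2n))`. -/
theorem binomial_tv_le (ε : ℝ) (hε0 : 0 < ε) (hε1 : ε ≤ 1)
    (n t : ℕ) (ht1 : 1 ≤ t) (htn : t ≤ n) :
    (1 / 2) * ∑ k ∈ Finset.range (n + 1),
        |((n.choose k : ℝ) * (1 / (Real.exp ε + 1)) ^ k *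
            (1 - 1 / (Real.exp ε + 1)) ^ (n - k)) -
          ((n.choose k : ℝ) * ((1 + ((t : ℝ) / n) * (Real.exp ε - 1)) / (1 + Real.exp ε)) ^ k *
            (1 - (1 + ((t : ℝ) / n) * (Real.exp ε - 1)) / (1 + Real.exp ε)) ^ (n - k))| ≤
      (t : ℝ) * (Real.exp ε - 1) / (Real.exp (ε / 2) * Real.sqrt (2 * n)) := by
  have hn1 : 1 ≤ n := le_trans ht1 htn
  have hn0 : 0 < (n : ℝ) := by exact_mod_cast hn1
  have ht0 : 0 < (t : ℝ) := by exact_mod_cast ht1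
  set s : ℝ := (t : ℝ) / n with hs
  have hs0 : 0 < s := by positivity
  have hs1 : s ≤ 1 := by
    rw [hs, div_le_one hn0]; exact_mod_cast htn
  set E : ℝ := Real.exp ε with hE
  have hE1 : 1 < E := by
    rw [hE]
    calc (1:ℝ) = Real.exp 0 := Real.exp_zero.symm
      _ < Real.exp ε := Real.exp_lt_exp.mpr hε0
  have hE0 : 0 < E := lt_trans one_pos hE1
  set p : ℝ := 1 / (Real.exp ε + 1) with hp
  set q : ℝ := (1 + s * (E - 1)) / (1 + E) with hq
  clear_value s E p q
  have hE' : (1 : ℝ) + E ≠ 0 := by linarith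
  have hn0' : (n : ℝ) ≠ 0 := ne_of_gt hn0
  have hpE : p = 1 / (1 + E) := by rw [hp, hE, add_comm]
  have hp0 : 0 < p := by rw [hpE]; exact div_pos one_pos (by linarith)
  have hp1 : p ≤ 1 := by rw [hpE, div_le_one (by linarith)]; linarith
  have hsE : s * (E - 1) ≤ E - 1 := by
    have := mul_le_mul_of_nonneg_right hs1 (by linarith : (0:ℝ) ≤ E - 1)
    linarith
  have hq0 : 0 ≤ q := by
    rw [hq]
    apply div_nonneg _ (by linarith)
    have := mul_nonneg hs0.le (by linarith : (0:ℝ) ≤ E - 1)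
    linarith
  have hq1 : q ≤ 1 := by
    rw [hq, div_le_one (by linarith)]; linarith
  have hqp : q - p = s * (E - 1) / (1 + E) := by
    rw [hq, hpE]; field_simp; ring
  have hpq : p ≤ q := by
    have : 0 ≤ s * (E - 1) / (1 + E) :=
      div_nonneg (mul_nonneg hs0.le (by linarith)) (by linarith)
    linarith [hqp, this]
  have h1q : 1 / (1 + E) ≤ 1 - q := by
    have hqE : q ≤ E / (1 + E) := by
      rw [hq]
      exact (div_le_div_iff_of_pos_right (by linarith)).mpr (by linarith)
    have : E / (1 + E) + 1 / (1 + E) = 1 := by field_simp; ring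
    linarith
  have h1q0 : 0 < 1 - q := lt_of_lt_of_le (div_pos one_pos (by linarith)) h1q
  -- bound on 1 - ρ
  set ρ : ℝ := Real.sqrt (p * q) + Real.sqrt ((1 - p) * (1 - q)) with hρdef
  clear_value ρ
  have hρid : 2 * (1 - ρ) = (Real.sqrt q - Real.sqrt p) ^ 2
      + (Real.sqrt (1 - p) - Real.sqrt (1 - q)) ^ 2 := by
    have e1 : Real.sqrt (p * q) = Real.sqrt q * Real.sqrt p := by
      rw [Real.sqrt_mul hp0.le, mul_comm]
    have e2 : Real.sqrt ((1 - p) * (1 - q)) = Real.sqrt (1 - p) * Real.sqrt (1 - q) :=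
      Real.sqrt_mul (by linarith) _
    have f1 : Real.sqrt q ^ 2 = q := Real.sq_sqrt hq0
    have f2 : Real.sqrt p ^ 2 = p := Real.sq_sqrt hp0.le
    have f3 : Real.sqrt (1 - p) ^ 2 = 1 - p := Real.sq_sqrt (by linarith)
    have f4 : Real.sqrt (1 - q) ^ 2 = 1 - q := Real.sq_sqrt h1q0.le
    rw [hρdef]
    linear_combination (-2) * e1 + (-2) * e2 - f1 - f2 - f3 - f4
  have hterm1 : (Real.sqrt q - Real.sqrt p) ^ 2 ≤ (q - p) ^ 2 * ((1 + E) / 4) := by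
    calc (Real.sqrt q - Real.sqrt p) ^ 2 ≤ (q - p) ^ 2 / (4 * p) :=
        aux_sqrt_sub_sq_le p q hp0 hpq
      _ = (q - p) ^ 2 * ((1 + E) / 4) := by
        rw [hpE]; field_simp
  have hterm2 : (Real.sqrt (1 - p) - Real.sqrt (1 - q)) ^ 2 ≤ (q - p) ^ 2 * ((1 + E) / 4) := by
    have h := aux_sqrt_sub_sq_le (1 - q) (1 - p) h1q0 (by linarith)
    have h2 : ((1 - p) - (1 - q)) ^ 2 / (4 * (1 - q)) ≤ (q - p) ^ 2 * ((1 + E) / 4) := by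
      have hnum : ((1 - p) - (1 - q)) ^ 2 = (q - p) ^ 2 := by ring
      rw [hnum, div_le_iff₀ (by linarith : (0:ℝ) < 4 * (1 - q))]
      have h1 : 1 ≤ (1 - q) * (1 + E) := (div_le_iff₀ (by linarith)).mp h1q
      calc (q - p) ^ 2 = (q - p) ^ 2 * 1 := (mul_one _).symm
        _ ≤ (q - p) ^ 2 * ((1 - q) * (1 + E)) :=
          mul_le_mul_of_nonneg_left h1 (sq_nonneg _)
        _ = (q - p) ^ 2 * ((1 + E) / 4) * (4 * (1 - q)) := by ring
    exact le_trans h h2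
  have hρbd : 1 - ρ ≤ (q - p) ^ 2 * ((1 + E) / 4) := by linarith
  -- apply aux bound
  set S : ℝ := ∑ k ∈ Finset.range (n + 1),
      |((n.choose k : ℝ) * p ^ k * (1 - p) ^ (n - k)) -
        ((n.choose k : ℝ) * q ^ k * (1 - q) ^ (n - k))| with hSdef
  clear_value S
  have hS0 : 0 ≤ S := hSdef ▸ Finset.sum_nonneg fun k _ => abs_nonneg _
  have haux := aux_tv_sq_bound n p q hp0.le hp1 hq0 hq1
  rw [← hρdef, ← hSdef] at haux
  have hS2 : S ^ 2 ≤ 2 * n * (q - p) ^ 2 * (1 + E) := by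
    calc S ^ 2 ≤ 8 * n * (1 - ρ) := haux
      _ ≤ 8 * n * ((q - p) ^ 2 * ((1 + E) / 4)) := by
        apply mul_le_mul_of_nonneg_left hρbd (by positivity)
      _ = 2 * n * (q - p) ^ 2 * (1 + E) := by ring
  -- the right-hand side
  set R : ℝ := (t : ℝ) * (E - 1) / (Real.exp (ε / 2) * Real.sqrt (2 * n)) with hR
  clear_value R
  have hR0 : 0 ≤ R := by
    rw [hR]
    apply div_nonneg (mul_nonneg ht0.le (by linarith)) (by positivity)
  have hx : Real.exp (ε / 2) * Real.exp (ε / 2) = E := by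
    rw [hE, ← Real.exp_add]; norm_num
  have hR2 : R ^ 2 = (t : ℝ) ^ 2 * (E - 1) ^ 2 / (2 * n * E) := by
    rw [hR, div_pow, mul_pow, mul_pow, Real.sq_sqrt (by positivity), sq (Real.exp (ε / 2)), hx]
    ring
  -- final comparison
  have hkey : ((1 / 2) * S) ^ 2 ≤ R ^ 2 := by
    have hv : 2 * (n:ℝ) * (q - p) ^ 2 * (1 + E)
        = 4 * ((t : ℝ) ^ 2 * (E - 1) ^ 2 / (2 * n * (1 + E))) := by
      rw [hqp, hs]
      field_simp
      ring
    have hmono : (t : ℝ) ^ 2 * (E - 1) ^ 2 / (2 * n * (1 + E))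
        ≤ (t : ℝ) ^ 2 * (E - 1) ^ 2 / (2 * n * E) := by
      apply div_le_div_of_nonneg_left (by positivity)
        (mul_pos (by positivity) hE0)
      exact mul_le_mul_of_nonneg_left (by linarith) (by positivity)
    rw [hR2]
    have hsq : (1 / 2 * S) ^ 2 = S ^ 2 / 4 := by ring
    linarith [hS2, hv, hmono, hsq]
  calc (1 / 2) * S = Real.sqrt (((1 / 2) * S) ^ 2) :=
      (Real.sqrt_sq (by linarith : (0:ℝ) ≤ 1 / 2 * S)).symm
    _ ≤ Real.sqrt (R ^ 2) := Real.sqrt_le_sqrt hkey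
    _ = R := Real.sqrt_sq hR0
end
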